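/- Let A^1, ..., A^p ⊆ R^n be finite sets of binary vectors (A^i ⊆ {0,1}^n), and for down-closed families of index sets, consider imposing monomial-agreement constraints on convex hulls. Specifically for p = 2 and a down-closed family S ⊆ 2^{[n]} containing all singletons: the set A(S) = { (x^1, x^2) : ∃ w^i with (x^i, w^i) ∈ conv({(x, (∏_{j∈S'} x_j)_{S'∈S}) : x ∈ A^i}), w^1_{S'} = w^2_{S'} ∀ S' ∈ S } is contained in B(S) = ∩_{U ∈ S} conv({ (x^1, x^2) : x^i ∈ A^i, x^1_j = x^2_j ∀ j ∈ U }). -/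

import Mathlib

/-!
Fix `U ∈ S`. For a 0/1-vector `x` and `W ⊆ U`, the product
`∏_{j ∈ W} x_j * ∏_{j ∈ U \ W} (1 - x_j)` is `1` if `x` restricted to `U` is the indicator of `W`
and `0` otherwise; these products sum to `1` over `W ⊆ U`. By inclusion–exclusion each of them is a
signed sum of monomials `∏_{j ∈ T} x_j` with `T ⊆ U`, and all such `T` lie in `S` because `S` is
down-closed. Hence they are restrictions of linear functionals `ℓ_W` of the lifted point, which
read only its monomial coordinates. A point `(x¹, w)` of the first hull splits as
`∑_W ℓ_W(w) • u_W` with `u_W` in the hull of the lifted points of pattern `W`, and likewise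
`(x², w)` with the *same* weights `ℓ_W(w)`. Pairing the pieces pattern by pattern writes
`(x¹, x²)` as a convex combination of points of `conv(A¹_W) × conv(A²_W) = conv(A¹_W × A²_W)`,
whose pairs agree on `U`.
-/

open Finset

section Convex

variable {𝕜 E F K : Type*} [Field 𝕜] [LinearOrder 𝕜] [IsStrictOrderedRing 𝕜]
  [AddCommGroup E] [Module 𝕜 E] [AddCommGroup F] [Module 𝕜 F]

theorem Convex.sum_mem_of_ne_zero {ι : Type*} {s : Set E} (hs : Convex 𝕜 s) {t : Finset ι}
    {w : ι → 𝕜} {z : ι → E} (h₀ : ∀ i ∈ t, 0 ≤ w i) (h₁ : ∑ i ∈ t, w i = 1)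
    (hz : ∀ i ∈ t, w i ≠ 0 → z i ∈ s) : ∑ i ∈ t, w i • z i ∈ s := by
  classical
  rw [← sum_filter_of_ne fun i _ h ↦ left_ne_zero_of_smul h]
  refine hs.sum_mem (fun i hi ↦ h₀ i (mem_filter.1 hi).1) ?_ fun i hi ↦
    hz i (mem_filter.1 hi).1 (mem_filter.1 hi).2
  rwa [sum_filter_ne_zero]

theorem Finset.sum_smul_centerMass_of_nonneg {ι : Type*} (t : Finset ι) {w : ι → 𝕜}
    (z : ι → E) (hw : ∀ i ∈ t, 0 ≤ w i) :
    (∑ i ∈ t, w i) • t.centerMass w z = ∑ i ∈ t, w i • z i := by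
  rcases eq_or_ne (∑ i ∈ t, w i) 0 with h | h
  · rw [h, zero_smul, eq_comm]
    exact sum_eq_zero fun i hi ↦ by rw [(sum_eq_zero_iff_of_nonneg hw).1 h i hi, zero_smul]
  · rw [centerMass, smul_inv_smul₀ h]

theorem exists_eq_sum_smul_of_mem_convexHull (s : Finset K) (ℓ : K → E →ₗ[𝕜] 𝕜) {P : Set E}
    (hℓ₀ : ∀ k ∈ s, ∀ p ∈ P, 0 ≤ ℓ k p) (hℓ₁ : ∀ p ∈ P, ∑ k ∈ s, ℓ k p = 1) {v : E}
    (hv : v ∈ convexHull 𝕜 P) :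
    ∃ u : K → E, (∀ k ∈ s, ℓ k v ≠ 0 → u k ∈ convexHull 𝕜 {p ∈ P | ℓ k p ≠ 0}) ∧
      v = ∑ k ∈ s, ℓ k v • u k := by
  classical
  obtain ⟨ι, _, c, z, hc₀, hc₁, hz, rfl⟩ := mem_convexHull_iff_exists_fintype.1 hv
  have hweight : ∀ k, ℓ k (∑ i, c i • z i) = ∑ i, c i * ℓ k (z i) := fun k ↦ by
    simp only [map_sum, map_smul, smul_eq_mul]
  have hw₀ : ∀ k ∈ s, ∀ i, 0 ≤ c i * ℓ k (z i) := fun k hk i ↦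
    mul_nonneg (hc₀ i) (hℓ₀ k hk _ (hz i))
  refine ⟨fun k ↦ univ.centerMass (fun i ↦ c i * ℓ k (z i)) z, fun k hk hne ↦ ?_, ?_⟩
  · rw [hweight] at hne
    dsimp only
    rw [← centerMass_filter_ne_zero]
    refine centerMass_mem_convexHull _ (fun i _ ↦ hw₀ k hk i) ?_ fun i hi ↦
      ⟨hz i, right_ne_zero_of_mul (mem_filter.1 hi).2⟩
    rw [sum_filter_ne_zero]
    exact (sum_nonneg fun i _ ↦ hw₀ k hk i).lt_of_ne' hne
  · calc ∑ i, c i • z i = ∑ i, ∑ k ∈ s, (c i * ℓ k (z i)) • z i := by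
          simp_rw [← sum_smul, ← mul_sum, hℓ₁ _ (hz _), mul_one]
      _ = ∑ k ∈ s, ℓ k (∑ i, c i • z i) • univ.centerMass (fun i ↦ c i * ℓ k (z i)) z := by
          rw [sum_comm]
          refine sum_congr rfl fun k hk ↦ ?_
          rw [hweight, sum_smul_centerMass_of_nonneg _ _ fun i _ ↦ hw₀ k hk i]

theorem prod_mem_convexHull_biUnion_of_eq (s : Finset K) (ℓ₁ : K → E →ₗ[𝕜] 𝕜)
    (ℓ₂ : K → F →ₗ[𝕜] 𝕜) {P₁ : Set E} {P₂ : Set F}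
    (hℓ₁₀ : ∀ k ∈ s, ∀ p ∈ P₁, 0 ≤ ℓ₁ k p) (hℓ₁₁ : ∀ p ∈ P₁, ∑ k ∈ s, ℓ₁ k p = 1)
    (hℓ₂₀ : ∀ k ∈ s, ∀ p ∈ P₂, 0 ≤ ℓ₂ k p) (hℓ₂₁ : ∀ p ∈ P₂, ∑ k ∈ s, ℓ₂ k p = 1)
    {v₁ : E} {v₂ : F} (hv₁ : v₁ ∈ convexHull 𝕜 P₁) (hv₂ : v₂ ∈ convexHull 𝕜 P₂)
    (hv : ∀ k ∈ s, ℓ₁ k v₁ = ℓ₂ k v₂) :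
    (v₁, v₂) ∈ convexHull 𝕜 (⋃ k ∈ s, {p ∈ P₁ | ℓ₁ k p ≠ 0} ×ˢ {p ∈ P₂ | ℓ₂ k p ≠ 0}) := by
  obtain ⟨u₁, hu₁, hv₁_eq⟩ := exists_eq_sum_smul_of_mem_convexHull s ℓ₁ hℓ₁₀ hℓ₁₁ hv₁
  obtain ⟨u₂, hu₂, hv₂_eq⟩ := exists_eq_sum_smul_of_mem_convexHull s ℓ₂ hℓ₂₀ hℓ₂₁ hv₂
  have hpair : (v₁, v₂) = ∑ k ∈ s, ℓ₁ k v₁ • (u₁ k, u₂ k) := by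
    refine Prod.ext ?_ ?_
    · simpa only [Prod.fst_sum, Prod.smul_mk] using hv₁_eq
    · simp only [Prod.snd_sum, Prod.smul_mk]
      exact hv₂_eq.trans (sum_congr rfl fun k hk ↦ by rw [hv k hk])
  rw [hpair]
  refine (convex_convexHull 𝕜 _).sum_mem_of_ne_zero
    (fun k hk ↦ convexHull_min (hℓ₁₀ k hk) (convex_halfSpace_ge (ℓ₁ k).isLinear 0) hv₁) ?_
    fun k hk hne ↦ ?_
  · have hsum : P₁ ⊆ {p | (∑ k ∈ s, ℓ₁ k) p = 1} := fun p hp ↦ by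
      simpa only [Set.mem_ofPred_eq, LinearMap.sum_apply] using hℓ₁₁ p hp
    simpa only [Set.mem_ofPred_eq, LinearMap.sum_apply] using
      convexHull_min hsum (convex_hyperplane (∑ k ∈ s, ℓ₁ k).isLinear 1) hv₁
  · refine convexHull_mono (Set.subset_biUnion_of_mem hk) ?_
    rw [convexHull_prod]
    exact ⟨hu₁ k hk hne, hu₂ k hk (hv k hk ▸ hne)⟩

end Convex

section Pattern

variable {ι R : Type*} [DecidableEq ι] [CommRing R]

def patternIndicator (U W : Finset ι) (x : ι → R) : R :=
  (∏ j ∈ W, x j) * ∏ j ∈ U \ W, (1 - x j)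

theorem sum_powerset_patternIndicator (U : Finset ι) (x : ι → R) :
    ∑ W ∈ U.powerset, patternIndicator U W x = 1 := by
  simp only [patternIndicator, ← prod_add, add_sub_cancel, prod_const_one]

theorem patternIndicator_eq_sum_monomials (U W : Finset ι) (x : ι → R) :
    patternIndicator U W x = ∑ T ∈ (U \ W).powerset, (-1) ^ #T * ∏ j ∈ W ∪ T, x j := by
  rw [patternIndicator, prod_sub, mul_sum]
  refine sum_congr rfl fun T hT ↦ ?_
  have hWT : Disjoint W T :=
    disjoint_of_subset_right (mem_powerset.1 hT) disjoint_sdiff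
  rw [prod_union hWT, prod_const_one]
  ring

theorem patternIndicator_nonneg [PartialOrder R] [IsOrderedRing R] (U W : Finset ι) {x : ι → R}
    (hx : ∀ j, x j = 0 ∨ x j = 1) : 0 ≤ patternIndicator U W x := by
  refine mul_nonneg (prod_nonneg fun j _ ↦ ?_) (prod_nonneg fun j _ ↦ ?_) <;>
    rcases hx j with h | h <;> simp [h]

theorem apply_eq_of_patternIndicator_ne_zero {U W : Finset ι} {x : ι → R}
    (hx : ∀ j, x j = 0 ∨ x j = 1) (h : patternIndicator U W x ≠ 0) {j : ι} (hj : j ∈ U) :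
    x j = if j ∈ W then 1 else 0 := by
  split_ifs with hjW
  · exact (hx j).resolve_left fun h0 ↦ left_ne_zero_of_mul h (prod_eq_zero hjW h0)
  · refine (hx j).resolve_right fun h1 ↦ right_ne_zero_of_mul h ?_
    exact prod_eq_zero (mem_sdiff.2 ⟨hj, hjW⟩) (by rw [h1, sub_self])

variable (S : Finset (Finset ι))

def momentLift (x : ι → R) : (ι → R) × ({T // T ∈ S} → R) :=
  (x, fun T ↦ ∏ j ∈ T.1, x j)

def monomialCoord (T : Finset ι) : ({T // T ∈ S} → R) →ₗ[R] R :=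
  if h : T ∈ S then LinearMap.proj ⟨T, h⟩ else 0

def patternFunctional (U W : Finset ι) : (ι → R) × ({T // T ∈ S} → R) →ₗ[R] R :=
  (∑ T ∈ (U \ W).powerset, (-1) ^ #T • monomialCoord S (W ∪ T)) ∘ₗ LinearMap.snd R _ _

variable {S}

theorem patternFunctional_momentLift (hdown : ∀ S' ∈ S, ∀ S'' ⊆ S', S'' ∈ S) {U W : Finset ι}
    (hU : U ∈ S) (hW : W ⊆ U) (x : ι → R) :
    patternFunctional S U W (momentLift S x) = patternIndicator U W x := by
  rw [patternIndicator_eq_sum_monomials]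
  simp only [patternFunctional, LinearMap.comp_apply, LinearMap.snd_apply, LinearMap.sum_apply,
    LinearMap.smul_apply]
  refine sum_congr rfl fun T hT ↦ ?_
  have hWT : W ∪ T ∈ S :=
    hdown U hU _ (union_subset hW ((mem_powerset.1 hT).trans sdiff_subset))
  simp [monomialCoord, hWT, momentLift]

theorem sum_patternFunctional_momentLift (hdown : ∀ S' ∈ S, ∀ S'' ⊆ S', S'' ∈ S) {U : Finset ι}
    (hU : U ∈ S) (x : ι → R) :
    ∑ W ∈ U.powerset, patternFunctional S U W (momentLift S x) = 1 := by
  rw [← sum_powerset_patternIndicator U x]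
  exact sum_congr rfl fun W hW ↦ patternFunctional_momentLift hdown hU (mem_powerset.1 hW) x

theorem patternFunctional_momentLift_nonneg [PartialOrder R] [IsOrderedRing R]
    (hdown : ∀ S' ∈ S, ∀ S'' ⊆ S', S'' ∈ S) {U W : Finset ι} (hU : U ∈ S) (hW : W ∈ U.powerset)
    {x : ι → R} (hx : ∀ j, x j = 0 ∨ x j = 1) :
    0 ≤ patternFunctional S U W (momentLift S x) := by
  rw [patternFunctional_momentLift hdown hU (mem_powerset.1 hW)]
  exact patternIndicator_nonneg U W hx

end Pattern

theorem stmt16_general {n : ℕ} (A1 A2 : Set (Fin n → ℝ))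
    (hb1 : ∀ x ∈ A1, ∀ j, x j = 0 ∨ x j = 1)
    (hb2 : ∀ x ∈ A2, ∀ j, x j = 0 ∨ x j = 1)
    (S : Finset (Finset (Fin n)))
    (hdown : ∀ S' ∈ S, ∀ S'' ⊆ S', S'' ∈ S) :
    {p : (Fin n → ℝ) × (Fin n → ℝ) |
        ∃ w1 w2 : {T : Finset (Fin n) // T ∈ S} → ℝ,
          (p.1, w1) ∈ convexHull ℝ
            {q : (Fin n → ℝ) × ({T : Finset (Fin n) // T ∈ S} → ℝ) |
              ∃ x ∈ A1, q = (x, fun T => ∏ j ∈ T.1, x j)} ∧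
          (p.2, w2) ∈ convexHull ℝ
            {q : (Fin n → ℝ) × ({T : Finset (Fin n) // T ∈ S} → ℝ) |
              ∃ x ∈ A2, q = (x, fun T => ∏ j ∈ T.1, x j)} ∧
          w1 = w2}
      ⊆ ⋂ U ∈ S, convexHull ℝ
          {p : (Fin n → ℝ) × (Fin n → ℝ) |
            p.1 ∈ A1 ∧ p.2 ∈ A2 ∧ ∀ j ∈ U, p.1 j = p.2 j} := by
  rintro ⟨x₁, x₂⟩ ⟨w, _, h₁, h₂, rfl⟩
  refine Set.mem_iInter₂.2 fun U hU ↦ ?_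
  have hglued := prod_mem_convexHull_biUnion_of_eq U.powerset
    (patternFunctional S U) (patternFunctional S U)
    (by rintro W hW _ ⟨x, hx, rfl⟩
        exact patternFunctional_momentLift_nonneg hdown hU hW (hb1 x hx))
    (by rintro _ ⟨x, -, rfl⟩; exact sum_patternFunctional_momentLift hdown hU x)
    (by rintro W hW _ ⟨x, hx, rfl⟩
        exact patternFunctional_momentLift_nonneg hdown hU hW (hb2 x hx))
    (by rintro _ ⟨x, -, rfl⟩; exact sum_patternFunctional_momentLift hdown hU x)
    h₁ h₂ fun _ _ ↦ rfl
  let π := LinearMap.fst ℝ (Fin n → ℝ) ({T // T ∈ S} → ℝ)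
  have hprojected := (π.prodMap π).image_convexHull _ ▸ Set.mem_image_of_mem _ hglued
  refine convexHull_mono ?_ hprojected
  rintro _ ⟨⟨_, _⟩, hpair, rfl⟩
  obtain ⟨W, hW, ⟨⟨a, ha, rfl⟩, hWa⟩, ⟨⟨b, hb, rfl⟩, hWb⟩⟩ := Set.mem_iUnion₂.1 hpair
  have hIa : patternIndicator U W a ≠ 0 := by
    rwa [← patternFunctional_momentLift hdown hU (mem_powerset.1 hW)]
  have hIb : patternIndicator U W b ≠ 0 := by
    rwa [← patternFunctional_momentLift hdown hU (mem_powerset.1 hW)]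
  refine ⟨ha, hb, fun j hj ↦ ?_⟩
  exact (apply_eq_of_patternIndicator_ne_zero (hb1 a ha) hIa hj).trans
    (apply_eq_of_patternIndicator_ne_zero (hb2 b hb) hIb hj).symm

/-- Theorem 2 of the paper in the two-block case: for a down-closed family `S`
containing all singletons, the monomial-agreement relaxation `A(S)` is
contained in `B(S)`. -/
theorem stmt16 {n : ℕ} (A1 A2 : Set (Fin n → ℝ)) (hA1 : A1.Finite) (hA2 : A2.Finite)
    (hb1 : ∀ x ∈ A1, ∀ j, x j = 0 ∨ x j = 1)
    (hb2 : ∀ x ∈ A2, ∀ j, x j = 0 ∨ x j = 1)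
    (S : Finset (Finset (Fin n)))
    (hdown : ∀ S' ∈ S, ∀ S'' ⊆ S', S'' ∈ S)
    (hsing : ∀ j : Fin n, ({j} : Finset (Fin n)) ∈ S) :
    {p : (Fin n → ℝ) × (Fin n → ℝ) |
        ∃ w1 w2 : {T : Finset (Fin n) // T ∈ S} → ℝ,
          (p.1, w1) ∈ convexHull ℝ
            {q : (Fin n → ℝ) × ({T : Finset (Fin n) // T ∈ S} → ℝ) |
              ∃ x ∈ A1, q = (x, fun T => ∏ j ∈ T.1, x j)} ∧
          (p.2, w2) ∈ convexHull ℝ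
            {q : (Fin n → ℝ) × ({T : Finset (Fin n) // T ∈ S} → ℝ) |
              ∃ x ∈ A2, q = (x, fun T => ∏ j ∈ T.1, x j)} ∧
          w1 = w2}
      ⊆ ⋂ U ∈ S, convexHull ℝ
          {p : (Fin n → ℝ) × (Fin n → ℝ) |
            p.1 ∈ A1 ∧ p.2 ∈ A2 ∧ ∀ j ∈ U, p.1 j = p.2 j} :=
  stmt16_general A1 A2 hb1 hb2 S hdown
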